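/- arXiv:2006.15077 — 4 statements merged into one kernel-verified Lean document; each statement's English description precedes it below -/
import Mathlib

section
/- Let n0, n1 ≥ 1 be natural numbers, n := n0 + n1, and let t be an odd natural number. Then the number of binary sequences x in B_{n0,n1} with τ(x) = t satisfies 2·n0·n1·|{x ∈ B_{n0,n1} : τ(x) = t}| = (t+1)² · C(n0, (t+1)/2) · C(n1, (t+1)/2), where C(a,b) denotes the binomial coefficient. -/
/-!
A binary sequence with `t` jumps consists of `t + 1` maximal runs of alternating values. If it
starts with `b`, then `t / 2 + 1` runs consist of `b`'s and `(t + 1) / 2` of the other value, so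
such sequences correspond to pairs of compositions of the two counts into that many positive
parts. Removing the first entry either shortens the first run or deletes it, which is Pascal's
rule for composition counts and drives the induction on the length. For `t = 2j + 1` both values
have `j + 1` runs, and `n * C(n - 1, j) = (j + 1) * C(n, j + 1)` gives the identity.
-/

/-- The number of jumps `τ(x) = |{i ∈ [n-1] : x_i ≠ x_{i+1}}|` of a binary sequence
`x ∈ {0,1}^n`. -/
def tau {n : ℕ} (x : Fin n → Bool) : ℕ :=
  (Finset.univ.filter (fun i : Fin n =>
    ∃ h : (i : ℕ) + 1 < n, x i ≠ x ⟨(i : ℕ) + 1, h⟩)).card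

/-- `B_{n0,n1}`, the set of binary sequences of length `n0 + n1` with exactly
`n0` zeros and `n1` ones. -/
def Bseq (n0 n1 : ℕ) : Finset (Fin (n0 + n1) → Bool) :=
  Finset.univ.filter (fun x =>
    (Finset.univ.filter (fun i => x i = false)).card = n0 ∧
    (Finset.univ.filter (fun i => x i = true)).card = n1)

open Finset

/-- The number of compositions of `m` into `k` positive parts. -/
def numCompositions : ℕ → ℕ → ℕ
  | 0, 0 => 1
  | 0, _ + 1 => 0
  | _ + 1, 0 => 0
  | m + 1, k + 1 => m.choose k

theorem numCompositions_succ_succ (m k : ℕ) :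
    numCompositions (m + 1) (k + 1) = numCompositions m (k + 1) + numCompositions m k := by
  rcases m with _ | m <;> rcases k with _ | k <;>
    simp [numCompositions, Nat.choose_succ_succ', add_comm]

theorem mul_numCompositions_succ (m k : ℕ) :
    m * numCompositions m (k + 1) = (k + 1) * m.choose (k + 1) := by
  rcases m with _ | m
  · simp [numCompositions]
  · rw [numCompositions, Nat.add_one_mul_choose_eq, mul_comm]

section
variable {n : ℕ}

def boolCount (b : Bool) (x : Fin n → Bool) : ℕ := #{i | x i = b}

theorem boolCount_cons (b c : Bool) (y : Fin n → Bool) :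
    boolCount c (Fin.cons b y : Fin (n + 1) → Bool) =
      (if b = c then 1 else 0) + boolCount c y := by
  rw [boolCount, boolCount, card_filter, card_filter, Fin.sum_univ_succ]
  simp

theorem tau_eq_card_castSucc_ne_succ (x : Fin (n + 1) → Bool) :
    tau x = #{i : Fin n | x i.castSucc ≠ x i.succ} := by
  rw [tau, card_filter, card_filter, Fin.sum_univ_castSucc]
  simp [Fin.succ]

theorem tau_cons (b : Bool) (y : Fin (n + 1) → Bool) :
    tau (Fin.cons b y : Fin (n + 2) → Bool) = (if b = y 0 then 0 else 1) + tau y := by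
  rw [tau_eq_card_castSucc_ne_succ, tau_eq_card_castSucc_ne_succ, card_filter, card_filter,
    Fin.sum_univ_succ]
  simp

theorem card_filter_head_eq {α : Type*} [Fintype α] [DecidableEq α] (a : α)
    (p : (Fin (n + 1) → α) → Prop) [DecidablePred p] :
    #{x | x 0 = a ∧ p x} = #{y : Fin n → α | p (Fin.cons a y)} := by
  refine card_nbij' Fin.tail (fun y => Fin.cons a y) ?_ ?_ ?_ ?_
  · intro x hx
    obtain ⟨rfl, hx⟩ := (mem_filter_univ x).1 hx
    simpa
  · intro y hy
    simp_all
  · intro x hx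
    obtain ⟨rfl, -⟩ := (mem_filter_univ x).1 hx
    exact Fin.cons_self_tail x
  · intro y _
    exact Fin.tail_cons _ _
end

def startingWith (n : ℕ) (b : Bool) (a c : ℕ) : Finset (Fin (n + 1) → Bool) :=
  {x | x 0 = b ∧ boolCount b x = a ∧ boolCount (!b) x = c}

theorem card_filter_startingWith (n : ℕ) (b : Bool) (a c : ℕ)
    (p : (Fin (n + 1) → Bool) → Prop) [DecidablePred p] :
    #{x ∈ startingWith n b a c | p x} =
      #{y : Fin n → Bool |
        1 + boolCount b y = a ∧ boolCount (!b) y = c ∧ p (Fin.cons b y)} := by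
  simp only [startingWith, filter_filter, and_assoc]
  rw [card_filter_head_eq]
  simp [boolCount_cons]

theorem card_filter_tau_startingWith_succ (n : ℕ) (b : Bool) (a c t : ℕ) :
    #{x ∈ startingWith (n + 1) b (a + 1) c | tau x = t} =
      #{x ∈ startingWith n b a c | tau x = t} +
        #{x ∈ startingWith n (!b) c a | tau x + 1 = t} := by
  rw [card_filter_startingWith,
    ← card_filter_add_card_filter_not (fun y : Fin (n + 1) → Bool => y 0 = b),
    startingWith, startingWith, filter_filter, filter_filter, filter_filter, filter_filter]
  congr 2 <;> ext y <;> cases b <;> cases hy : y 0 <;> simp [tau_cons, hy] <;> omega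

theorem card_filter_tau_startingWith (n : ℕ) (b : Bool) {a c : ℕ} (h : a + c = n + 1)
    (t : ℕ) :
    #{x ∈ startingWith n b a c | tau x = t} =
      numCompositions a (t / 2 + 1) * numCompositions c ((t + 1) / 2) := by
  induction n generalizing b a c t with
  | zero =>
    rw [card_filter_startingWith]
    obtain ⟨rfl, rfl⟩ | ⟨rfl, rfl⟩ : a = 1 ∧ c = 0 ∨ a = 0 ∧ c = 1 := by omega
    all_goals obtain _ | t := t
    all_goals simp [boolCount, tau_eq_card_castSucc_ne_succ, numCompositions,
      show ∀ s : ℕ, (s + 1 + 1) / 2 = s / 2 + 1 by omega]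
  | succ n ih =>
    obtain _ | a := a
    · simp [card_filter_startingWith, numCompositions]
    rw [card_filter_tau_startingWith_succ, ih b (by omega) t]
    obtain _ | t := t
    · obtain _ | c := c
      · obtain rfl : a = n + 1 := by omega
        simp [numCompositions]
      · simp [numCompositions]
    · simp only [add_left_inj]
      rw [ih (!b) (by omega) t, numCompositions_succ_succ,
        show (t + 1 + 1) / 2 = t / 2 + 1 by omega]
      ring

theorem card_filter_boolCount_tau {m : ℕ} (hm : m ≠ 0) {a c : ℕ} (h : a + c = m) (t : ℕ) :
    #{x : Fin m → Bool | (boolCount false x = a ∧ boolCount true x = c) ∧ tau x = t} =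
      numCompositions a (t / 2 + 1) * numCompositions c ((t + 1) / 2) +
        numCompositions c (t / 2 + 1) * numCompositions a ((t + 1) / 2) := by
  obtain ⟨n, rfl⟩ := Nat.exists_eq_succ_of_ne_zero hm
  rw [← card_filter_tau_startingWith n false h,
    ← card_filter_tau_startingWith n true (by omega),
    ← card_filter_add_card_filter_not (fun x : Fin (n + 1) → Bool => x 0 = false),
    startingWith, startingWith, filter_filter, filter_filter, filter_filter, filter_filter]
  congr 2 <;> ext x <;>
    simp only [mem_filter, mem_univ, true_and, Bool.not_false, Bool.not_true, Bool.not_eq_false] <;>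
    tauto

theorem Bseq_eq_filter_boolCount (n0 n1 : ℕ) :
    Bseq n0 n1 = ({x | boolCount false x = n0 ∧ boolCount true x = n1} : Finset _) :=
  rfl

theorem stmt_0_general (n0 n1 t : ℕ) (ht : Odd t) :
    2 * n0 * n1 * ((Bseq n0 n1).filter (fun x => tau x = t)).card =
      (t + 1) ^ 2 * Nat.choose n0 ((t + 1) / 2) * Nat.choose n1 ((t + 1) / 2) := by
  obtain ⟨j, rfl⟩ := ht
  have hj : (2 * j + 1 + 1) / 2 = j + 1 := by omega
  rcases eq_or_ne (n0 + n1) 0 with hn | hn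
  · obtain ⟨rfl, rfl⟩ : n0 = 0 ∧ n1 = 0 := by omega
    simp [hj]
  rw [Bseq_eq_filter_boolCount, filter_filter, card_filter_boolCount_tau hn rfl,
    show (2 * j + 1) / 2 + 1 = j + 1 by omega, hj]
  calc 2 * n0 * n1 * (numCompositions n0 (j + 1) * numCompositions n1 (j + 1) +
          numCompositions n1 (j + 1) * numCompositions n0 (j + 1))
      = 4 * (n0 * numCompositions n0 (j + 1)) * (n1 * numCompositions n1 (j + 1)) := by ring
    _ = (2 * j + 1 + 1) ^ 2 * n0.choose (j + 1) * n1.choose (j + 1) := by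
      rw [mul_numCompositions_succ, mul_numCompositions_succ]; ring

theorem stmt_0 (n0 n1 t : ℕ) (h0 : 1 ≤ n0) (h1 : 1 ≤ n1) (ht : Odd t) :
    2 * n0 * n1 * ((Bseq n0 n1).filter (fun x => tau x = t)).card =
      (t + 1) ^ 2 * Nat.choose n0 ((t + 1) / 2) * Nat.choose n1 ((t + 1) / 2) :=
  stmt_0_general n0 n1 t ht
end

section
/- Let m ≥ 1 be a natural number and let X be sampled uniformly at random from B_{m,m}. Then the variance of τ(X) equals m(m − 1)/(2m − 1). -/
/-!
Write `τ = ∑ᵢ Jᵢ`, where `Jᵢ` indicates a jump between positions `i` and `i + 1`. Each event `Jᵢ`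
or `Jᵢ ∧ Jⱼ` is a disjoint union of events fixing the values of `X` at two, three or four
positions, and exactly `C(2m - s, m - t)` sequences of `B_{m,m}` take prescribed values at `s`
positions, `t` of them ones. With `c = C(2m - 2, m - 1)` this gives `2c` sequences with a jump at a
given place, `c` with jumps at two adjacent places and `4 C(2m - 4, m - 2)` with jumps at two places
further apart, whence `∑ τ = m C(2m, m)` and `∑ τ² = 2(2m² - 1) c`. The identity
`m C(2m, m) = 2(2m - 1) c` turns these into `E τ = m` and `E τ² = m(2m² - 1)/(2m - 1)`.
-/

open MeasureTheory ProbabilityTheory Finset Nat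

theorem integral_uniformOn_finset {α : Type*} [Fintype α] [DecidableEq α] [MeasurableSpace α]
    [MeasurableSingletonClass α] (s : Finset α) (f : α → ℝ) :
    ∫ x, f x ∂uniformOn (s : Set α) = (∑ x ∈ s, f x) / #s := by
  rw [integral_fintype .of_finite, sum_div, ← sum_subset (subset_univ s)]
  · refine sum_congr rfl fun x hx => ?_
    simp [measureReal_def, ← coe_singleton, uniformOn_apply_finset, hx, div_eq_inv_mul]
  · intro x _ hx
    simp [measureReal_def, ← coe_singleton, uniformOn_apply_finset, hx]

theorem variance_uniformOn_finset {α : Type*} [Fintype α] [DecidableEq α] [MeasurableSpace α]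
    [MeasurableSingletonClass α] {s : Finset α} (hs : s.Nonempty) (f : α → ℝ) :
    variance f (uniformOn (s : Set α)) = (∑ x ∈ s, f x ^ 2) / #s - ((∑ x ∈ s, f x) / #s) ^ 2 := by
  have := isProbabilityMeasure_uniformOn s.finite_toSet (coe_nonempty.2 hs)
  rw [variance_eq_sub .of_discrete, ← integral_uniformOn_finset, ← integral_uniformOn_finset]
  rfl

theorem card_filter_eq_add_of_iff_or {α : Type*} {s : Finset α} {P Q R : α → Prop} [DecidablePred P]
    [DecidablePred Q] [DecidablePred R] (hP : ∀ x, P x ↔ Q x ∨ R x) (hQR : ∀ x, Q x → ¬R x) :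
    #{x ∈ s | P x} = #{x ∈ s | Q x} + #{x ∈ s | R x} := by
  classical
  rw [← card_union_of_disjoint (disjoint_filter.2 fun x _ => hQR x), ← filter_or]
  exact congrArg card (filter_congr fun x _ => hP x)

theorem mul_centralBinom_eq (m : ℕ) :
    m * centralBinom m = 2 * (2 * m - 1) * centralBinom (m - 1) := by
  rcases m with _ | k
  · simp
  · rw [succ_mul_centralBinom_succ, add_tsub_cancel_right]
    congr 2

theorem card_filter_trueOn_falseOn {ι : Type*} [Fintype ι] [DecidableEq ι] (k : ℕ)
    {T F : Finset ι} (hTF : Disjoint T F) (hT : #T ≤ k) :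
    #{x : ι → Bool | #{i | x i = true} = k ∧ (∀ i ∈ T, x i = true) ∧ ∀ i ∈ F, x i = false}
      = (Fintype.card ι - #T - #F).choose (k - #T) := by
  have hcompl : #(univ \ (T ∪ F)) = Fintype.card ι - #T - #F := by
    rw [card_sdiff_of_subset (subset_univ _), card_union_of_disjoint hTF, Finset.card_univ]
    omega
  rw [← hcompl, ← card_powersetCard]
  refine card_bij' (fun x _ => ({i | x i = true} : Finset ι) \ T)
    (fun U _ i => decide (i ∈ U ∪ T)) ?_ ?_ ?_ ?_
  · intro x hx
    simp only [mem_filter, mem_univ, true_and] at hx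
    obtain ⟨hk, hxT, hxF⟩ := hx
    have hTsub : T ⊆ ({i | x i = true} : Finset ι) := fun i hi => by simpa using hxT i hi
    rw [mem_powersetCard, card_sdiff_of_subset hTsub, hk]
    refine ⟨fun i hi => ?_, rfl⟩
    simp only [mem_sdiff, mem_filter, mem_univ, true_and, mem_union, not_or] at hi ⊢
    exact ⟨hi.2, fun hiF => by simp [hxF i hiF] at hi⟩
  · intro U hU
    rw [mem_powersetCard] at hU
    obtain ⟨hUsub, hUcard⟩ := hU
    have hUT : Disjoint U T := disjoint_left.2 fun i hi hiT => by simpa [hiT] using hUsub hi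
    have hUF : Disjoint U F := disjoint_left.2 fun i hi hiF => by simpa [hiF] using hUsub hi
    simp only [mem_filter, mem_univ, true_and, decide_eq_true_eq, decide_eq_false_iff_not,
      mem_union]
    refine ⟨?_, fun i hi => Or.inr hi, fun i hiF hi => ?_⟩
    · rw [show ({i | i ∈ U ∨ i ∈ T} : Finset ι) = U ∪ T by ext; simp,
        card_union_of_disjoint hUT]
      omega
    · exact hi.elim (disjoint_left.1 hUF · hiF) (disjoint_left.1 hTF · hiF)
  · intro x hx
    simp only [mem_filter, mem_univ, true_and] at hx
    funext i
    by_cases hiT : i ∈ T <;> simp [hiT, hx.2.1 i]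
  · intro U hU
    rw [mem_powersetCard] at hU
    ext i
    have := @hU.1 i
    simp only [mem_sdiff, mem_filter, mem_univ, true_and, mem_union, not_or,
      decide_eq_true_eq] at this ⊢
    tauto

theorem mem_Bseq_iff {n0 n1 : ℕ} {x : Fin (n0 + n1) → Bool} :
    x ∈ Bseq n0 n1 ↔ #{i | x i = true} = n1 := by
  have h := card_filter_add_card_filter_not (s := univ) (fun i => x i = true)
  rw [Finset.card_univ, Fintype.card_fin] at h
  simp only [Bool.not_eq_true] at h
  simp only [Bseq, mem_filter, mem_univ, true_and]
  omega

theorem card_filter_Bseq_trueOn_falseOn {n0 n1 : ℕ} {T F : Finset (Fin (n0 + n1))}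
    (hTF : Disjoint T F) (hT : #T ≤ n1) :
    #{x ∈ Bseq n0 n1 | (∀ i ∈ T, x i = true) ∧ ∀ i ∈ F, x i = false}
      = (n0 + n1 - #T - #F).choose (n1 - #T) := by
  have h := card_filter_trueOn_falseOn n1 hTF hT
  rw [Fintype.card_fin] at h
  rw [← h]
  congr 1
  ext x
  simp only [mem_filter, mem_univ, true_and, mem_Bseq_iff]

theorem card_Bseq (n0 n1 : ℕ) : #(Bseq n0 n1) = (n0 + n1).choose n1 := by
  simpa using card_filter_Bseq_trueOn_falseOn (n0 := n0) (n1 := n1) (disjoint_empty_left ∅)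
    (by simp)

section DistinctPositions

variable {m : ℕ} {a b c d : Fin (m + m)}

theorem card_filter_ne_Bseq (hab : a ≠ b) :
    #{x ∈ Bseq m m | x a ≠ x b} = 2 * centralBinom (m - 1) := by
  have hm : 1 ≤ m := by have := a.2; have := b.2; omega
  have hpattern : ∀ {u v : Fin (m + m)}, u ≠ v →
      #{x ∈ Bseq m m | x u = true ∧ x v = false} = centralBinom (m - 1) := by
    intro u v huv
    have := card_filter_Bseq_trueOn_falseOn (T := {u}) (F := {v}) (disjoint_singleton.2 huv)
      (by simpa using hm)
    simp only [mem_singleton, forall_eq, card_singleton] at this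
    rw [this, centralBinom, show m + m - 1 - 1 = 2 * (m - 1) by omega]
  rw [card_filter_eq_add_of_iff_or (Q := fun x => x a = true ∧ x b = false)
      (R := fun x => x b = true ∧ x a = false) (fun x => by cases x a <;> cases x b <;> simp)
      (fun x => by cases x a <;> simp), hpattern hab, hpattern hab.symm, two_mul]

theorem card_filter_ne_and_ne_Bseq_chain (hab : a ≠ b) (hac : a ≠ c) (hbc : b ≠ c) :
    #{x ∈ Bseq m m | x a ≠ x b ∧ x b ≠ x c} = centralBinom (m - 1) := by
  have hm : 2 ≤ m := by
    have := card_le_univ {a, b, c}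
    rw [card_insert_of_notMem (by simp [hab, hac]), card_pair hbc, Fintype.card_fin] at this
    omega
  have hdisj : Disjoint ({b} : Finset (Fin (m + m))) {a, c} := by simp [hab.symm, hbc]
  have h1 := card_filter_Bseq_trueOn_falseOn hdisj (by simp; omega)
  have h2 := card_filter_Bseq_trueOn_falseOn hdisj.symm (by rw [card_pair hac]; omega)
  simp only [mem_singleton, forall_eq, mem_insert, forall_eq_or_imp, card_singleton,
    card_pair hac] at h1 h2
  rw [card_filter_eq_add_of_iff_or (Q := fun x => x b = true ∧ x a = false ∧ x c = false)
      (R := fun x => (x a = true ∧ x c = true) ∧ x b = false)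
      (fun x => by cases x a <;> cases x b <;> cases x c <;> simp)
      (fun x => by cases x b <;> simp), h1, h2, centralBinom,
    show 2 * (m - 1) = (m + m - 2 - 1) + 1 by omega, show m - 1 = (m - 2) + 1 by omega,
    choose_succ_succ', show m + m - 2 - 1 = m + m - 1 - 2 by omega, add_comm]

theorem card_filter_ne_and_ne_Bseq (hab : a ≠ b) (hac : a ≠ c) (had : a ≠ d)
    (hbc : b ≠ c) (hbd : b ≠ d) (hcd : c ≠ d) :
    #{x ∈ Bseq m m | x a ≠ x b ∧ x c ≠ x d} = 4 * centralBinom (m - 2) := by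
  have hm : 2 ≤ m := by
    have := card_le_univ {a, b, c, d}
    rw [card_insert_of_notMem (by simp [hab, hac, had]),
      card_insert_of_notMem (by simp [hbc, hbd]), card_pair hcd, Fintype.card_fin] at this
    omega
  have hpattern : ∀ {u v w z : Fin (m + m)}, u ≠ w → v ≠ z →
      Disjoint ({u, w} : Finset (Fin (m + m))) {v, z} →
      #{x ∈ Bseq m m | (x u = true ∧ x w = true) ∧ x v = false ∧ x z = false}
        = centralBinom (m - 2) := by
    intro u v w z huw hvz hdisj
    have := card_filter_Bseq_trueOn_falseOn hdisj (by rw [card_pair huw]; omega)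
    simp only [mem_insert, mem_singleton, forall_eq_or_imp, forall_eq, card_pair huw,
      card_pair hvz] at this
    rw [this, centralBinom, show m + m - 2 - 2 = 2 * (m - 2) by omega]
  have hsplit : ∀ {u v w z : Fin (m + m)},
      #{x ∈ Bseq m m | x u ≠ x v ∧ x w = true ∧ x z = false}
        = #{x ∈ Bseq m m | (x u = true ∧ x w = true) ∧ x v = false ∧ x z = false}
          + #{x ∈ Bseq m m | (x v = true ∧ x w = true) ∧ x u = false ∧ x z = false} := by
    intro u v w z
    exact card_filter_eq_add_of_iff_or (fun x => by cases x u <;> cases x v <;> simp)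
      (fun x => by cases x u <;> simp)
  rw [card_filter_eq_add_of_iff_or (Q := fun x => x a ≠ x b ∧ x c = true ∧ x d = false)
      (R := fun x => x a ≠ x b ∧ x d = true ∧ x c = false)
      (fun x => by cases x c <;> cases x d <;> simp) (fun x => by cases x c <;> simp),
    hsplit, hsplit, hpattern hac hbd (by simp [hab.symm, hbc, had.symm, hcd.symm]),
    hpattern hbc had (by simp [hab, hac, hbd.symm, hcd.symm]),
    hpattern had hbc (by simp [hab.symm, hbd, hac.symm, hcd]),
    hpattern hbd hac (by simp [hab, had, hbc.symm, hcd])]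
  ring

end DistinctPositions

def HasJumpAt {n : ℕ} (x : Fin n → Bool) (i : Fin n) : Prop :=
  ∃ h : (i : ℕ) + 1 < n, x i ≠ x ⟨i + 1, h⟩

instance {n : ℕ} (x : Fin n → Bool) : DecidablePred (HasJumpAt x) :=
  fun _ => inferInstanceAs (Decidable (∃ _, _))

theorem tau_eq_card {n : ℕ} (x : Fin n → Bool) : tau x = #{i | HasJumpAt x i} := rfl

theorem sum_tau_eq_sum_card_filter {n : ℕ} (s : Finset (Fin n → Bool)) :
    ∑ x ∈ s, tau x = ∑ i, #{x ∈ s | HasJumpAt x i} := by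
  simp only [tau_eq_card, card_filter]
  exact sum_comm

theorem sum_tau_sq_eq_sum_card_filter {n : ℕ} (s : Finset (Fin n → Bool)) :
    ∑ x ∈ s, tau x ^ 2 = ∑ i, ∑ j, #{x ∈ s | HasJumpAt x i ∧ HasJumpAt x j} := by
  simp only [tau_eq_card, card_filter, sq, sum_mul_sum, ite_zero_mul_ite_zero, mul_one]
  rw [sum_comm]
  exact sum_congr rfl fun _ _ => sum_comm

def tridiag (p q r a b : ℕ) : ℕ := if a = b then p else if a = b + 1 ∨ b = a + 1 then q else r

theorem tridiag_comm (p q r a b : ℕ) : tridiag p q r a b = tridiag p q r b a := by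
  unfold tridiag
  split_ifs <;> omega

theorem sum_range_tridiag_succ (p q r N : ℕ) :
    ∑ a ∈ range (N + 1), tridiag p q r a (N + 1) = q + N * r := by
  rw [sum_range_succ, sum_congr rfl fun a ha => (show tridiag p q r a (N + 1) = r by
    simp only [mem_range] at ha; unfold tridiag; split_ifs <;> omega)]
  simp [tridiag, add_comm]

theorem sum_range_sum_range_tridiag (p q r N : ℕ) :
    ∑ a ∈ range (N + 1), ∑ b ∈ range (N + 1), tridiag p q r a b
      = (N + 1) * p + 2 * N * q + N * (N - 1) * r := by
  induction N with
  | zero => simp [tridiag]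
  | succ N ih =>
    have hrow : ∑ b ∈ range (N + 1), tridiag p q r (N + 1) b = q + N * r := by
      simp_rw [tridiag_comm p q r (N + 1)]; exact sum_range_tridiag_succ p q r N
    rw [sum_range_succ, sum_congr rfl fun a _ => sum_range_succ (tridiag p q r a) (N + 1),
      sum_add_distrib, ih, sum_range_tridiag_succ, sum_range_succ, hrow]
    rcases N with _ | N <;> simp [tridiag] <;> ring

theorem sum_fin_ite_succ_lt {M : Type*} [AddCommMonoid M] (n : ℕ) (f : ℕ → M) :
    ∑ i : Fin n, (if (i : ℕ) + 1 < n then f i else 0) = ∑ a ∈ range (n - 1), f a := by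
  rw [Fin.sum_univ_eq_sum_range (fun a => if a + 1 < n then f a else 0), ← sum_filter]
  congr 1
  ext a
  simp only [mem_filter, mem_range]
  omega

theorem sum_fin_sum_fin_ite_succ_lt {M : Type*} [AddCommMonoid M] (n : ℕ) (g : ℕ → ℕ → M) :
    ∑ i : Fin n, ∑ j : Fin n, (if (i : ℕ) + 1 < n ∧ (j : ℕ) + 1 < n then g i j else 0)
      = ∑ a ∈ range (n - 1), ∑ b ∈ range (n - 1), g a b := by
  rw [← sum_fin_ite_succ_lt n]
  refine sum_congr rfl fun i _ => ?_
  split_ifs with hi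
  · simp only [hi, true_and]
    exact sum_fin_ite_succ_lt n (g i)
  · simp [hi]

section JumpsInBseq

variable {m : ℕ}

theorem card_filter_hasJumpAt_Bseq (i : Fin (m + m)) :
    #{x ∈ Bseq m m | HasJumpAt x i} =
      if (i : ℕ) + 1 < m + m then 2 * centralBinom (m - 1) else 0 := by
  split_ifs with hi
  · rw [filter_congr fun x _ => show HasJumpAt x i ↔ x i ≠ x ⟨i + 1, hi⟩ by
      simp [HasJumpAt, hi]]
    exact card_filter_ne_Bseq (Fin.ne_of_val_ne (by simp))
  · rw [Finset.card_eq_zero, filter_eq_empty_iff]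
    rintro x _ ⟨hi', _⟩
    exact hi hi'

theorem card_filter_hasJumpAt_and_hasJumpAt_Bseq (i j : Fin (m + m)) :
    #{x ∈ Bseq m m | HasJumpAt x i ∧ HasJumpAt x j} =
      if (i : ℕ) + 1 < m + m ∧ (j : ℕ) + 1 < m + m then
        tridiag (2 * centralBinom (m - 1)) (centralBinom (m - 1)) (4 * centralBinom (m - 2)) i j
      else 0 := by
  split_ifs with h
  · obtain ⟨hi, hj⟩ := h
    have hi_succ : ((⟨i + 1, hi⟩ : Fin (m + m)) : ℕ) = i + 1 := rfl
    have hj_succ : ((⟨j + 1, hj⟩ : Fin (m + m)) : ℕ) = j + 1 := rfl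
    rw [filter_congr fun x _ => show HasJumpAt x i ∧ HasJumpAt x j ↔
      x i ≠ x ⟨i + 1, hi⟩ ∧ x j ≠ x ⟨j + 1, hj⟩ by simp [HasJumpAt, hi, hj]]
    unfold tridiag
    split_ifs with hij hadj
    · obtain rfl := Fin.ext hij
      simp only [and_self]
      exact card_filter_ne_Bseq (Fin.ne_of_val_ne (by omega))
    · rcases hadj with hadj | hadj
      · rw [show (⟨j + 1, hj⟩ : Fin (m + m)) = i from Fin.ext hadj.symm,
          filter_congr fun x _ => and_comm]
        exact card_filter_ne_and_ne_Bseq_chain (Fin.ne_of_val_ne (by omega))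
          (Fin.ne_of_val_ne (by omega)) (Fin.ne_of_val_ne (by omega))
      · rw [show (⟨i + 1, hi⟩ : Fin (m + m)) = j from Fin.ext hadj.symm]
        exact card_filter_ne_and_ne_Bseq_chain (Fin.ne_of_val_ne (by omega))
          (Fin.ne_of_val_ne (by omega)) (Fin.ne_of_val_ne (by omega))
    · exact card_filter_ne_and_ne_Bseq (Fin.ne_of_val_ne (by omega))
        (Fin.ne_of_val_ne (by omega)) (Fin.ne_of_val_ne (by omega))
        (Fin.ne_of_val_ne (by omega)) (Fin.ne_of_val_ne (by omega)) (Fin.ne_of_val_ne (by omega))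
  · rw [Finset.card_eq_zero, filter_eq_empty_iff]
    rintro x _ ⟨⟨hi, _⟩, ⟨hj, _⟩⟩
    exact h ⟨hi, hj⟩

variable (m)

theorem sum_tau_Bseq : ∑ x ∈ Bseq m m, tau x = m * centralBinom m := by
  rw [sum_tau_eq_sum_card_filter, sum_congr rfl fun i _ => card_filter_hasJumpAt_Bseq i,
    sum_fin_ite_succ_lt (m + m) (fun _ => 2 * centralBinom (m - 1)), sum_const, card_range,
    smul_eq_mul, mul_centralBinom_eq, show m + m - 1 = 2 * m - 1 by omega]
  ring

theorem sum_tau_sq_Bseq :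
    ∑ x ∈ Bseq m m, tau x ^ 2 = 2 * (2 * m ^ 2 - 1) * centralBinom (m - 1) := by
  rw [sum_tau_sq_eq_sum_card_filter, sum_congr rfl fun i _ => sum_congr rfl fun j _ =>
    card_filter_hasJumpAt_and_hasJumpAt_Bseq i j, sum_fin_sum_fin_ite_succ_lt]
  rcases m with _ | k
  · simp
  · have hrec := mul_centralBinom_eq k
    rw [show k + 1 + (k + 1) - 1 = 2 * k + 1 by omega, sum_range_sum_range_tridiag,
      add_tsub_cancel_right, show k + 1 - 2 = k - 1 by omega,
      show 2 * k * (2 * k - 1) * (4 * centralBinom (k - 1)) = 4 * k * (k * centralBinom k) by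
        rw [hrec]; ring,
      show 2 * (k + 1) ^ 2 - 1 = 2 * k ^ 2 + 4 * k + 1 from Nat.sub_eq_of_eq_add (by ring)]
    ring

end JumpsInBseq

theorem stmt_8 (m : ℕ) (hm : 1 ≤ m) :
    variance (fun x => (tau x : ℝ))
      (uniformOn (↑(Bseq m m) : Set (Fin (m + m) → Bool))) =
      (m : ℝ) * ((m : ℝ) - 1) / (2 * (m : ℝ) - 1) := by
  have hne : (Bseq m m).Nonempty := by
    rw [← card_pos, card_Bseq]
    exact choose_pos (by omega)
  have hN : (#(Bseq m m) : ℝ) = centralBinom m := by rw [card_Bseq, centralBinom, two_mul]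
  have hsum : ∑ x ∈ Bseq m m, (tau x : ℝ) = m * centralBinom m := by
    exact_mod_cast sum_tau_Bseq m
  have hsum_sq : ∑ x ∈ Bseq m m, (tau x : ℝ) ^ 2
      = 2 * (2 * m ^ 2 - 1) * centralBinom (m - 1) := by
    have : 1 ≤ 2 * m ^ 2 := by nlinarith
    exact_mod_cast sum_tau_sq_Bseq m
  have hrec : (m : ℝ) * centralBinom m = 2 * (2 * m - 1) * centralBinom (m - 1) := by
    have : 1 ≤ 2 * m := by omega
    exact_mod_cast mul_centralBinom_eq m
  rw [variance_uniformOn_finset hne, hsum, hsum_sq, hN]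
  have hc : (0 : ℝ) < centralBinom m := by exact_mod_cast centralBinom_pos m
  have h2m : 2 * (m : ℝ) - 1 ≠ 0 := by
    have : (1 : ℝ) ≤ m := by exact_mod_cast hm
    linarith
  field_simp
  linear_combination (1 - 2 * (m : ℝ) ^ 2) * hrec
end

section
/- For every natural number m ≥ 1, the identity 4(2m − 1) · Σ_{x=1}^{m} x³ · C(m, x)² = m³ · (m + 1) · C(2m, m) holds, where C(a, b) denotes the binomial coefficient. -/
/-!
Write `m = n + 1`. Absorbing `x * C(m, x) = m * C(n, x - 1)` twice turns the sum into
`m² * ∑ₖ (k + 1) C(n, k)²`. The reflection `k ↦ n - k` gives `2 ∑ₖ k C(n, k)² = n ∑ₖ C(n, k)²`,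
and Vandermonde gives `∑ₖ C(n, k)² = C(2n, n)`, so the sum is `m² (n + 2) C(2n, n) / 2`.
The recurrence `m C(2m, m) = 2 (2n + 1) C(2n, n)` then matches the right-hand side.
-/

open Finset

theorem Nat.two_mul_sum_range_mul_choose_sq (n : ℕ) :
    2 * ∑ k ∈ range (n + 1), k * n.choose k ^ 2 = n * (2 * n).choose n := by
  have reflect : ∑ k ∈ range (n + 1), (n - k) * n.choose k ^ 2 =
      ∑ k ∈ range (n + 1), k * n.choose k ^ 2 := by
    rw [← sum_range_reflect]
    refine sum_congr rfl fun k hk => ?_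
    have hk : k ≤ n := mem_range_succ_iff.mp hk
    rw [add_tsub_cancel_right, Nat.sub_sub_self hk, choose_symm hk]
  calc 2 * ∑ k ∈ range (n + 1), k * n.choose k ^ 2
      = ∑ k ∈ range (n + 1), (k + (n - k)) * n.choose k ^ 2 := by
        simp only [add_mul, sum_add_distrib, reflect, two_mul]
    _ = ∑ k ∈ range (n + 1), n * n.choose k ^ 2 :=
        sum_congr rfl fun k hk => by rw [Nat.add_sub_cancel' (mem_range_succ_iff.mp hk)]
    _ = n * (2 * n).choose n := by rw [← mul_sum, Nat.sum_range_choose_sq]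

theorem Nat.two_mul_sum_range_succ_mul_choose_sq (n : ℕ) :
    2 * ∑ k ∈ range (n + 1), (k + 1) * n.choose k ^ 2 = (n + 2) * (2 * n).choose n := by
  simp only [add_mul, one_mul, sum_add_distrib, mul_add, two_mul_sum_range_mul_choose_sq,
    Nat.sum_range_choose_sq]

theorem Nat.succ_pow_three_mul_choose_succ_sq (n k : ℕ) :
    (k + 1) ^ 3 * (n + 1).choose (k + 1) ^ 2 = (n + 1) ^ 2 * ((k + 1) * n.choose k ^ 2) :=
  calc (k + 1) ^ 3 * (n + 1).choose (k + 1) ^ 2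
      = (k + 1) * ((n + 1).choose (k + 1) * (k + 1)) ^ 2 := by ring
    _ = (n + 1) ^ 2 * ((k + 1) * n.choose k ^ 2) := by rw [← add_one_mul_choose_eq]; ring

theorem Nat.sum_Icc_pow_three_mul_choose_sq (n : ℕ) :
    ∑ x ∈ Icc 1 (n + 1), x ^ 3 * (n + 1).choose x ^ 2 =
      (n + 1) ^ 2 * ∑ k ∈ range (n + 1), (k + 1) * n.choose k ^ 2 := by
  rw [← Ico_add_one_right_eq_Icc, sum_Ico_eq_sum_range, Nat.add_sub_cancel, mul_sum]
  exact sum_congr rfl fun k _ => by rw [add_comm 1 k, succ_pow_three_mul_choose_succ_sq]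

theorem stmt_13_general (m : ℕ) :
    4 * (2 * m - 1) * ∑ x ∈ Finset.Icc 1 m, x ^ 3 * (Nat.choose m x) ^ 2 =
      m ^ 3 * (m + 1) * Nat.choose (2 * m) m := by
  rcases m with _ | n
  · simp
  have hcentral := Nat.succ_mul_centralBinom_succ n
  rw [Nat.centralBinom, Nat.centralBinom] at hcentral
  rw [Nat.sum_Icc_pow_three_mul_choose_sq, show 2 * (n + 1) - 1 = 2 * n + 1 by omega]
  calc 4 * (2 * n + 1) * ((n + 1) ^ 2 * ∑ k ∈ range (n + 1), (k + 1) * n.choose k ^ 2)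
      = 2 * (2 * n + 1) * (n + 1) ^ 2 * (2 * ∑ k ∈ range (n + 1), (k + 1) * n.choose k ^ 2) := by
        ring
    _ = (n + 1) ^ 2 * (n + 2) * (2 * (2 * n + 1) * (2 * n).choose n) := by
        rw [Nat.two_mul_sum_range_succ_mul_choose_sq]; ring
    _ = (n + 1) ^ 3 * (n + 1 + 1) * (2 * (n + 1)).choose (n + 1) := by rw [← hcentral]; ring

theorem stmt_13 (m : ℕ) (hm : 1 ≤ m) :
    4 * (2 * m - 1) * ∑ x ∈ Finset.Icc 1 m, x ^ 3 * (Nat.choose m x) ^ 2 =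
      m ^ 3 * (m + 1) * Nat.choose (2 * m) m :=
  stmt_13_general m
end

section
/- Let x ∈ {0,1}^n be a binary sequence of length n containing exactly n0 ≥ 1 zeros and n1 ≥ 1 ones. Define r_i := |{j : x_j ≤ x_i}| and l_i := |{j : x_j ≥ x_i}| for i ∈ {1,…,n}. Then Chatterjee's coefficient computed on x satisfies 1 − (n · Σ_{i=1}^{n−1} |r_{i+1} − r_i|) / (2 · Σ_{i=1}^{n} l_i · (n − l_i)) = 1 − (n / (2 · n0 · n1)) · τ(x), where τ(x) := |{i ∈ {1,…,n−1} : x_i ≠ x_{i+1}}| is the number of jumps in x. -/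
/-- `r_i = |{j : x_j ≤ x_i}|` for a binary sequence `x ∈ {0,1}^n` (with `false < true`). -/
def rcount {n : ℕ} (x : Fin n → Bool) (i : Fin n) : ℕ :=
  (Finset.univ.filter (fun j : Fin n => x j ≤ x i)).card

/-- `l_i = |{j : x_j ≥ x_i}|` for a binary sequence `x ∈ {0,1}^n` (with `false < true`). -/
def lcount {n : ℕ} (x : Fin n → Bool) (i : Fin n) : ℕ :=
  (Finset.univ.filter (fun j : Fin n => x i ≤ x j)).card

/-! On a binary sequence `r_i` is `n0` at a zero and `n` at a one, while `l_i` is `n` at a zero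
and `n1` at a one. So every jump contributes `n - n0 = n1` to the numerator sum, only the ones
contribute `n1 (n - n1) = n1 n0` to the denominator sum, and the quotient is `n τ / (2 n0 n1)`.
If `n1 = 0` the sequence has no jump and both sides are `1` (with Lean's `a / 0 = 0`). -/

open Finset

section

variable {n : ℕ} (x : Fin n → Bool)

theorem card_false_add_card_true : #{i | x i = false} + #{i | x i = true} = n := by
  simpa using card_filter_add_card_filter_not (s := univ) (fun i => x i = false)

variable {x}

theorem rcount_of_false {i : Fin n} (hi : x i = false) : rcount x i = #{j | x j = false} := by
  unfold rcount
  congr 1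
  exact filter_congr fun j _ => by cases x j <;> simp [hi]

theorem rcount_of_true {i : Fin n} (hi : x i = true) : rcount x i = n := by
  simp [rcount, hi]

theorem lcount_of_false {i : Fin n} (hi : x i = false) : lcount x i = n := by
  simp [lcount, hi]

theorem lcount_of_true {i : Fin n} (hi : x i = true) : lcount x i = #{j | x j = true} := by
  unfold lcount
  congr 1
  exact filter_congr fun j _ => by cases x j <;> simp [hi]

theorem natAbs_rcount_sub_rcount (i j : Fin n) :
    ((rcount x j : ℤ) - rcount x i).natAbs = if x i = x j then 0 else #{k | x k = true} := by
  have := card_false_add_card_true x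
  cases hi : x i <;> cases hj : x j <;>
    simp only [rcount_of_false, rcount_of_true, hi, hj, if_true, if_false, reduceCtorEq] <;> omega

theorem tau_eq_zero_of_card_true_eq_zero (h : #{i | x i = true} = 0) : tau x = 0 := by
  simp only [card_eq_zero, filter_eq_empty_iff, mem_univ, true_implies, Bool.not_eq_true] at h
  simp [tau, h]

variable (x)

theorem sum_natAbs_rcount_succ_sub :
    (∑ i : Fin n, if h : (i : ℕ) + 1 < n then
        (((rcount x ⟨(i : ℕ) + 1, h⟩ : ℤ) - (rcount x i : ℤ)).natAbs : ℝ) else 0) =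
      #{i | x i = true} * tau x := by
  have summand (i : Fin n) : (if h : (i : ℕ) + 1 < n then
      (((rcount x ⟨(i : ℕ) + 1, h⟩ : ℤ) - (rcount x i : ℤ)).natAbs : ℝ) else 0) =
        if ∃ h : (i : ℕ) + 1 < n, x i ≠ x ⟨(i : ℕ) + 1, h⟩ then (#{j | x j = true} : ℝ) else 0 := by
    by_cases h : (i : ℕ) + 1 < n
    · by_cases hne : x i = x ⟨(i : ℕ) + 1, h⟩ <;> simp [h, hne, natAbs_rcount_sub_rcount]
    · simp [h]
  simp only [summand, ← sum_filter, sum_const, nsmul_eq_mul, tau, mul_comm]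

theorem lcount_mul_sub_lcount (i : Fin n) :
    (lcount x i : ℝ) * (n - lcount x i) =
      if x i = true then (#{j | x j = true} * #{j | x j = false} : ℝ) else 0 := by
  have hn : (n : ℝ) = #{j | x j = false} + #{j | x j = true} :=
    mod_cast (card_false_add_card_true x).symm
  cases hi : x i
  · simp [lcount_of_false hi]
  · simp [lcount_of_true hi, hn]

theorem sum_lcount_mul_sub_lcount :
    ∑ i : Fin n, (lcount x i : ℝ) * (n - lcount x i) =
      #{i | x i = true} * (#{i | x i = true} * #{i | x i = false} : ℝ) := by
  simp only [lcount_mul_sub_lcount, ← sum_filter, sum_const, nsmul_eq_mul]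

end

theorem stmt_16_general (n n0 n1 : ℕ) (x : Fin n → Bool)
    (hx0 : (Finset.univ.filter (fun i => x i = false)).card = n0)
    (hx1 : (Finset.univ.filter (fun i => x i = true)).card = n1) :
    1 - ((n : ℝ) * ∑ i : Fin n, if h : (i : ℕ) + 1 < n then
          (((rcount x ⟨(i : ℕ) + 1, h⟩ : ℤ) - (rcount x i : ℤ)).natAbs : ℝ) else 0) /
        (2 * ∑ i : Fin n, ((lcount x i : ℝ) * ((n : ℝ) - (lcount x i : ℝ)))) =
      1 - ((n : ℝ) / (2 * (n0 : ℝ) * (n1 : ℝ))) * (tau x : ℝ) := by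
  rw [sum_natAbs_rcount_succ_sub, sum_lcount_mul_sub_lcount, hx0, hx1]
  rcases eq_or_ne n1 0 with rfl | hn1
  · simp [tau_eq_zero_of_card_true_eq_zero hx1]
  · congr 1
    field_simp

theorem stmt_16 (n n0 n1 : ℕ) (h0 : 1 ≤ n0) (h1 : 1 ≤ n1) (x : Fin n → Bool)
    (hx0 : (Finset.univ.filter (fun i => x i = false)).card = n0)
    (hx1 : (Finset.univ.filter (fun i => x i = true)).card = n1) :
    1 - ((n : ℝ) * ∑ i : Fin n, if h : (i : ℕ) + 1 < n then
          (((rcount x ⟨(i : ℕ) + 1, h⟩ : ℤ) - (rcount x i : ℤ)).natAbs : ℝ) else 0) /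
        (2 * ∑ i : Fin n, ((lcount x i : ℝ) * ((n : ℝ) - (lcount x i : ℝ)))) =
      1 - ((n : ℝ) / (2 * (n0 : ℝ) * (n1 : ℝ))) * (tau x : ℝ) :=
  stmt_16_general n n0 n1 x hx0 hx1
end
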